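/- Let X := (ℕ × ℕ) ⊕ ℕ ⊕ Unit, with Xₙ := {n} × ℕ, yₙ the n-th point of the middle summand, and z the point of the last summand, and let ξ be the convergence on X in which a proper filter F converges to x iff every ultrafilter finer than F converges to x, where an ultrafilter V converges to a point x ∈ ⋃ₙ Xₙ iff V = pure x; V converges to yₙ iff V = pure yₙ or V refines the cofinite filter on Xₙ; and V converges to z iff V = pure z, or V refines the cofinite filter on {yₙ : n ∈ ω}, or there is a sequence (xₙ)ₙ with xₙ ∈ Xₙ for each n such that V refines the cofinite filter on {xₙ : n ∈ ω}. Let F be the filter on X consisting of all sets A ⊆ X such that Xₙ \ A is finite for every n ∈ ω. Then z ∈ adh_ξ(adh_ξ F) \ adh_ξ F, where adh_ξ(adh_ξ F) denotes the adherence of the principal filter of the set adh_ξ F. In particular ξ is not weakly diagonal: there is a filter on X whose adherence is not ξ-closed. -/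
import Mathlib


open Filter Set

/-- A convergence on `X`: a relation between points and proper filters such that
limits are preserved under refinement and `pure x` converges to `x`. -/
def IsConvergence {X : Type*} (lim : X → Filter X → Prop) : Prop :=
  (∀ (x : X) (F G : Filter X), G.NeBot → G ≤ F → lim x F → lim x G) ∧
  (∀ x : X, lim x (pure x))

/-- The adherence of a filter `H`: the set of points that are limits of some
proper filter finer than `H`. -/
def adh {X : Type*} (lim : X → Filter X → Prop) (H : Filter X) : Set X :=
  {x | ∃ G : Filter X, G.NeBot ∧ G ≤ H ∧ lim x G}

/-- Adherence of a set: the adherence of its principal filter. -/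
def adhSet {X : Type*} (lim : X → Filter X → Prop) (A : Set X) : Set X :=
  adh lim (𝓟 A)

/-- The ground set `X := (ℕ × ℕ) ⊕ ℕ ⊕ Unit`. -/
abbrev Xsp : Type := (ℕ × ℕ) ⊕ (ℕ ⊕ Unit)

/-- `Xₙ := {n} × ℕ`, the `n`-th countably infinite set. -/
def Xn (n : ℕ) : Set Xsp := {x | ∃ k : ℕ, x = Sum.inl (n, k)}

/-- `yₙ`, the `n`-th point of the middle summand. -/
def ypt (n : ℕ) : Xsp := Sum.inr (Sum.inl n)

/-- `z`, the point of the last summand. -/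
def zpt : Xsp := Sum.inr (Sum.inr ())

/-- The set `{yₙ : n ∈ ω}`. -/
def Yset : Set Xsp := Set.range ypt

/-- The cofinite filter on a subset `A ⊆ X`: generated by the sets `A \ K`, `K` finite. -/
def cofinOn {X : Type*} (A : Set X) : Filter X :=
  ⨅ K ∈ {K : Set X | K.Finite}, 𝓟 (A \ K)

/-- Convergence of ultrafilters: `V` converges to `x ∈ ⋃ₙ Xₙ` iff `V = pure x`;
`V` converges to `yₙ` iff `V = pure yₙ` or `V` refines the cofinite filter on `Xₙ`;
`V` converges to `z` iff `V = pure z`, or `V` refines the cofinite filter on `{yₙ : n ∈ ω}`,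
or `V` refines the cofinite filter on `{xₙ : n ∈ ω}` for some sequence with `xₙ ∈ Xₙ`. -/
def uconv (V : Ultrafilter Xsp) : Xsp → Prop
  | Sum.inl p => V = pure (Sum.inl p)
  | Sum.inr (Sum.inl n) =>
      V = pure (ypt n) ∨ (V : Filter Xsp) ≤ cofinOn (Xn n)
  | Sum.inr (Sum.inr _) =>
      V = pure zpt ∨ (V : Filter Xsp) ≤ cofinOn Yset ∨
        ∃ s : ℕ → Xsp, (∀ n, s n ∈ Xn n) ∧ (V : Filter Xsp) ≤ cofinOn (Set.range s)

/-- The convergence `ξ` on `Xsp`: a proper filter converges to `x` iff every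
ultrafilter finer than it converges to `x`. -/
def xconv (x : Xsp) (F : Filter Xsp) : Prop :=
  ∀ V : Ultrafilter Xsp, (V : Filter Xsp) ≤ F → uconv V x

/-- The filter on `Xsp` consisting of all sets `A` such that `Xₙ \ A` is finite
for every `n ∈ ω`. -/
def Ffil : Filter Xsp where
  sets := {A | ∀ n, (Xn n \ A).Finite}
  univ_sets := by intro n; simp
  sets_of_superset := by
    intro A B hA hAB n
    exact (hA n).subset (Set.diff_subset_diff_right hAB)
  inter_sets := by
    intro A B hA hB n
    rw [Set.diff_inter]
    exact (hA n).union (hB n)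

lemma cofinOn_le' {X : Type*} (A : Set X) {K : Set X} (hK : K.Finite) :
    cofinOn A ≤ 𝓟 (A \ K) := iInf₂_le K hK

lemma mem_cofinOn {X : Type*} {A K s : Set X} (hK : K.Finite) (h : A \ K ⊆ s) :
    s ∈ cofinOn A := cofinOn_le' A hK (mem_principal.2 h)

lemma self_mem_cofinOn {X : Type*} (A : Set X) : A ∈ cofinOn A :=
  mem_cofinOn finite_empty (by simp)

lemma cofinOn_eq {X : Type*} (A : Set X) : cofinOn A = cofinite ⊓ 𝓟 A := by
  apply le_antisymm
  · refine le_inf (fun t ht => ?_) ?_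
    · exact mem_cofinOn (mem_cofinite.mp ht) fun x hx => by
        by_contra hxt; exact hx.2 hxt
    · simpa using cofinOn_le' A finite_empty
  · refine le_iInf₂ fun K hK => ?_
    have h1 : cofinite ⊓ 𝓟 A ≤ 𝓟 Kᶜ ⊓ 𝓟 A :=
      inf_le_inf_right _ (le_principal_iff.2 (mem_cofinite.2 (by simpa using hK)))
    calc cofinite ⊓ 𝓟 A ≤ 𝓟 Kᶜ ⊓ 𝓟 A := h1
      _ = 𝓟 (A \ K) := by rw [inf_principal, inter_comm, diff_eq]

lemma cofinOn_neBot {X : Type*} {A : Set X} (h : A.Infinite) : (cofinOn A).NeBot := by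
  rw [cofinOn_eq]; exact h.cofinite_inf_principal_neBot

lemma mem_Ffil {A : Set Xsp} : A ∈ Ffil ↔ ∀ n, (Xn n \ A).Finite := Iff.rfl

lemma Xn_eq (n : ℕ) : Xn n = Set.range (fun k => (Sum.inl (n, k) : Xsp)) := by
  ext x; simp [Xn, eq_comm]

lemma Xn_infinite (n : ℕ) : (Xn n).Infinite := by
  rw [Xn_eq]
  exact Set.infinite_range_of_injective (fun a b h => by
    simpa using h)

lemma Yset_infinite : Yset.Infinite :=
  Set.infinite_range_of_injective (fun a b h => by simpa [ypt] using h)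

lemma cofinOn_Xn_le_Ffil (n : ℕ) : cofinOn (Xn n) ≤ Ffil := by
  intro A hA
  exact mem_cofinOn (mem_Ffil.mp hA n) (fun x hx => by
    by_contra hxA; exact hx.2 ⟨hx.1, hxA⟩)

lemma Yset_subset_adh : Yset ⊆ adh xconv Ffil := by
  rintro _ ⟨n, rfl⟩
  refine ⟨cofinOn (Xn n), cofinOn_neBot (Xn_infinite n), cofinOn_Xn_le_Ffil n, ?_⟩
  intro V hV
  exact Or.inr hV

lemma zpt_not_adh : zpt ∉ adh xconv Ffil := by
  rintro ⟨G, hG, hGF, hconv⟩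
  obtain ⟨V, hV⟩ := Ultrafilter.exists_le G
  have hVF : (V : Filter Xsp) ≤ Ffil := hV.trans hGF
  have key : ∀ s : Set Xsp, s ∈ V → sᶜ ∈ V → False := fun s h1 h2 => by
    have := Filter.nonempty_of_mem (Filter.inter_mem h1 h2)
    simp at this
  rcases hconv V hV with h | h | ⟨s, hs, h⟩
  · -- V = pure zpt, but {zpt}ᶜ ∈ Ffil
    have hmem : ({zpt}ᶜ : Set Xsp) ∈ Ffil := by
      refine mem_Ffil.mpr fun n => (Set.finite_singleton zpt).subset fun x hx => ?_
      simpa using hx.2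
    have := hVF hmem
    rw [h] at this
    simp at this
  · -- V ≤ cofinOn Yset, but Ysetᶜ ∈ Ffil
    have hmem : (Ysetᶜ : Set Xsp) ∈ Ffil := by
      refine mem_Ffil.mpr fun n => Set.finite_empty.subset fun x hx => ?_
      obtain ⟨hx1, hx2⟩ := hx
      obtain ⟨k, rfl⟩ := hx1
      obtain ⟨m, hm⟩ := not_not.mp hx2
      simp [ypt] at hm
    exact key Yset (h (self_mem_cofinOn Yset)) (hVF hmem)
  · -- V ≤ cofinOn (range s) with s n ∈ Xn n, but (range s)ᶜ ∈ Ffil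
    have hmem : ((Set.range s)ᶜ : Set Xsp) ∈ Ffil := by
      refine mem_Ffil.mpr fun n => (Set.finite_singleton (s n)).subset fun x hx => ?_
      obtain ⟨hx1, hx2⟩ := hx
      obtain ⟨k, rfl⟩ := hx1
      obtain ⟨m, hm⟩ := not_not.mp hx2
      obtain ⟨k', hk'⟩ := hs m
      rw [hk'] at hm
      simp only [Sum.inl.injEq, Prod.mk.injEq] at hm
      obtain ⟨rfl, rfl⟩ := hm
      simp [hk']
    exact key (Set.range s) (h (self_mem_cofinOn _)) (hVF hmem)

lemma zpt_adhSet : zpt ∈ adhSet xconv (adh xconv Ffil) := by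
  refine ⟨cofinOn Yset, cofinOn_neBot Yset_infinite, ?_, ?_⟩
  · rw [le_principal_iff]
    exact mem_cofinOn finite_empty (by simpa using Yset_subset_adh)
  · intro V hV
    exact Or.inr (Or.inl hV)

/-- For the filter `F` of all sets `A` with `Xₙ \ A` finite for every `n`:
`z ∈ adh_ξ (adh_ξ F) \ adh_ξ F`. In particular `ξ` is not weakly diagonal. -/
theorem xconv_not_weakly_diagonal :
    (zpt ∈ adhSet xconv (adh xconv Ffil) ∧ zpt ∉ adh xconv Ffil) ∧
    ∃ G : Filter Xsp, adhSet xconv (adh xconv G) ≠ adh xconv G := by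
  refine ⟨⟨zpt_adhSet, zpt_not_adh⟩, Ffil, fun h => zpt_not_adh (h ▸ zpt_adhSet)⟩
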